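/- Let S be a real random variable on an atomless probability space. Then there exists a random variable U uniformly distributed on (0,1) such that S = F_S^{-1}(U) almost surely, where F_S^{-1}(α) = inf{x : P(S ≤ x) ≥ α}. -/

import Mathlib

open MeasureTheory ProbabilityTheory
open scoped NNReal

/-- Value at risk: left-continuous generalized inverse of the distribution function. -/
noncomputable def VaR {Ω : Type*} [MeasurableSpace Ω] (P : Measure Ω) (X : Ω → ℝ) (α : ℝ) : ℝ :=
  sInf {x : ℝ | α ≤ (P {ω | X ω ≤ x}).toReal}

/-- A set `A ⊆ ℝⁿ` is comonotonic. -/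
def ComonotonicSet {n : ℕ} (A : Set (Fin n → ℝ)) : Prop :=
  ∀ x ∈ A, ∀ y ∈ A, (∃ i, x i < y i) → ∀ j, x j ≤ y j

/-- Topological support of a measure. -/
def measSupport {E : Type*} [TopologicalSpace E] [MeasurableSpace E] (μ : Measure E) : Set E :=
  {x | ∀ U : Set E, IsOpen U → x ∈ U → 0 < μ U}

/-- A random vector is comonotonic iff the support of its distribution is comonotonic. -/
def Comonotonic {Ω : Type*} [MeasurableSpace Ω] (P : Measure Ω) {n : ℕ}
    (X : Fin n → Ω → ℝ) : Prop :=
  ComonotonicSet (measSupport (P.map (fun ω i => X i ω)))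

/-- An atomless probability space. -/
def Atomless {Ω : Type*} [MeasurableSpace Ω] (P : Measure Ω) : Prop :=
  ∀ A : Set Ω, MeasurableSet A → 0 < P A →
    ∃ B, MeasurableSet B ∧ B ⊆ A ∧ 0 < P B ∧ P B < P A

/-- `U` is uniformly distributed on `(0,1)`. -/
def UniformOn01 {Ω : Type*} [MeasurableSpace Ω] (P : Measure Ω) (U : Ω → ℝ) : Prop :=
  P.map U = volume.restrict (Set.Ioo (0 : ℝ) 1)

open Set
open scoped ENNReal

section AuxSierpinski
variable {Ω : Type*} [MeasurableSpace Ω] {P : Measure Ω} [IsProbabilityMeasure P]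

lemma atomless_half (hP : Atomless P) {A : Set Ω} (hA : MeasurableSet A) (hpos : 0 < P A) :
    ∃ B, MeasurableSet B ∧ B ⊆ A ∧ 0 < P B ∧ P B ≤ P A / 2 := by
  obtain ⟨B, mB, hBA, h0, hlt⟩ := hP A hA hpos
  rcases le_or_gt (P B) (P A / 2) with h | h
  · exact ⟨B, mB, hBA, h0, h⟩
  · refine ⟨A \ B, hA.diff mB, diff_subset, ?_, ?_⟩
    · rw [measure_diff hBA mB.nullMeasurableSet (measure_ne_top P B)]
      exact tsub_pos_iff_lt.2 hlt
    · rw [measure_diff hBA mB.nullMeasurableSet (measure_ne_top P B)]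
      rw [tsub_le_iff_right]
      calc P A = P A / 2 + P A / 2 := (ENNReal.add_halves _).symm
      _ ≤ P A / 2 + P B := by gcongr

lemma atomless_small (hP : Atomless P) {A : Set Ω} (hA : MeasurableSet A) (hpos : 0 < P A)
    {ε : ℝ≥0∞} (hε : 0 < ε) :
    ∃ B, MeasurableSet B ∧ B ⊆ A ∧ 0 < P B ∧ P B ≤ ε := by
  have key : ∀ n : ℕ, ∀ A : Set Ω, MeasurableSet A → 0 < P A →
      ∃ B, MeasurableSet B ∧ B ⊆ A ∧ 0 < P B ∧ P B ≤ P A * 2⁻¹ ^ n := by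
    intro n
    induction n with
    | zero => intro A hA hpos; exact ⟨A, hA, subset_rfl, hpos, by simp⟩
    | succ n ih =>
      intro A hA hpos
      obtain ⟨B, mB, hBA, h0, hle⟩ := atomless_half hP hA hpos
      obtain ⟨C, mC, hCB, h0C, hleC⟩ := ih B mB h0
      refine ⟨C, mC, hCB.trans hBA, h0C, hleC.trans ?_⟩
      calc P B * 2⁻¹ ^ n ≤ P A / 2 * 2⁻¹ ^ n := by gcongr
      _ = P A * 2⁻¹ ^ (n + 1) := by
        rw [div_eq_mul_inv, pow_succ]; ring
  obtain ⟨n, hn⟩ := ENNReal.exists_inv_two_pow_lt hε.ne'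
  obtain ⟨B, mB, hBA, h0, hle⟩ := key n A hA hpos
  refine ⟨B, mB, hBA, h0, hle.trans ?_⟩
  calc P A * 2⁻¹ ^ n ≤ 1 * 2⁻¹ ^ n := by gcongr; exact prob_le_one
  _ ≤ ε := by rw [one_mul]; exact hn.le

lemma atomless_exists_subset (hP : Atomless P) {A : Set Ω} (hA : MeasurableSet A)
    {c : ℝ≥0∞} (hc : c ≤ P A) :
    ∃ B, MeasurableSet B ∧ B ⊆ A ∧ P B = c := by
  classical
  -- type of admissible partial sets
  let T := {B : Set Ω // MeasurableSet B ∧ B ⊆ A ∧ P B ≤ c}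
  have step_exists : ∀ B : T, ∃ C : Set Ω, MeasurableSet C ∧ C ⊆ A \ B.1 ∧
      P (B.1 ∪ C) ≤ c ∧ ∀ C', MeasurableSet C' → C' ⊆ A \ B.1 → P (B.1 ∪ C') ≤ c →
        P C' ≤ 2 * P C := by
    intro B
    set δ : ℝ≥0∞ := ⨆ C' : {C' : Set Ω // MeasurableSet C' ∧ C' ⊆ A \ B.1 ∧ P (B.1 ∪ C') ≤ c},
      P C'.1 with hδ
    have hδ_le : ∀ C', MeasurableSet C' → C' ⊆ A \ B.1 → P (B.1 ∪ C') ≤ c → P C' ≤ δ := by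
      intro C' h1 h2 h3
      exact le_iSup (fun (x : {C' : Set Ω // MeasurableSet C' ∧ C' ⊆ A \ B.1 ∧ P (B.1 ∪ C') ≤ c})
        => P x.1) ⟨C', h1, h2, h3⟩
    rcases eq_or_lt_of_le (zero_le : 0 ≤ δ) with h0 | h0
    · refine ⟨∅, MeasurableSet.empty, empty_subset _, by simpa using B.2.2.2, ?_⟩
      intro C' h1 h2 h3
      have := hδ_le C' h1 h2 h3
      rw [← h0] at this
      simpa using this
    · have hδ_top : δ ≠ ∞ := by
        refine ne_top_of_le_ne_top (measure_ne_top P A) ?_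
        refine iSup_le fun C' => measure_mono (C'.2.2.1.trans diff_subset)
      have hhalf : δ / 2 < δ := ENNReal.half_lt_self h0.ne' hδ_top
      obtain ⟨C, hC⟩ := lt_iSup_iff.1 hhalf
      refine ⟨C.1, C.2.1, C.2.2.1, C.2.2.2, ?_⟩
      intro C' h1 h2 h3
      calc P C' ≤ δ := hδ_le C' h1 h2 h3
      _ = δ / 2 + δ / 2 := (ENNReal.add_halves _).symm
      _ ≤ P C.1 + P C.1 := by gcongr <;> exact hC.le
      _ = 2 * P C.1 := (two_mul _).symm
  choose Cf hCf1 hCf2 hCf3 hCf4 using step_exists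
  let step : T → T := fun B => ⟨B.1 ∪ Cf B, B.2.1.union (hCf1 B),
    union_subset B.2.2.1 ((hCf2 B).trans diff_subset), hCf3 B⟩
  let seq : ℕ → T := fun n => step^[n] ⟨∅, MeasurableSet.empty, empty_subset _, by simp⟩
  have hseq_succ : ∀ n, seq (n + 1) = step (seq n) := fun n =>
    Function.iterate_succ_apply' step n _
  have hmono : Monotone fun n => (seq n).1 := by
    refine monotone_nat_of_le_succ fun n => ?_
    rw [hseq_succ n]
    exact subset_union_left
  set Binf : Set Ω := ⋃ n, (seq n).1 with hBinf
  have hBinfm : MeasurableSet Binf := MeasurableSet.iUnion fun n => (seq n).2.1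
  have hBinfA : Binf ⊆ A := iUnion_subset fun n => (seq n).2.2.1
  have hBinfc : P Binf ≤ c := by
    rw [hBinf, Directed.measure_iUnion (directed_of_isDirected_le hmono)]
    exact iSup_le fun n => (seq n).2.2.2
  refine ⟨Binf, hBinfm, hBinfA, le_antisymm hBinfc ?_⟩
  by_contra hlt
  push_neg at hlt
  have hdiffpos : 0 < P (A \ Binf) := by
    rw [measure_diff hBinfA hBinfm.nullMeasurableSet (measure_ne_top P _)]
    exact tsub_pos_iff_lt.2 (lt_of_lt_of_le hlt hc)
  obtain ⟨C, mC, hCA, h0C, hleC⟩ := atomless_small hP (hA.diff hBinfm) hdiffpos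
    (ε := c - P Binf) (tsub_pos_iff_lt.2 hlt)
  -- C is admissible at every stage
  have hadm : ∀ n, P C ≤ 2 * P (Cf (seq n)) := by
    intro n
    refine hCf4 (seq n) C mC (hCA.trans (diff_subset_diff_right (subset_iUnion (fun k => ((seq k : T) : Set Ω)) n))) ?_
    calc P ((seq n).1 ∪ C) ≤ P (seq n).1 + P C := measure_union_le _ _
    _ ≤ P Binf + (c - P Binf) :=
        add_le_add (measure_mono (subset_iUnion (fun k => ((seq k : T) : Set Ω)) n)) hleC
    _ = c := by
        rw [add_comm]
        exact tsub_add_cancel_of_le hBinfc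
  -- the Cf (seq n) are pairwise disjoint with union inside Binf
  have hsub : ∀ n, Cf (seq n) ⊆ (seq (n + 1)).1 := by
    intro n
    rw [hseq_succ n]
    exact subset_union_right
  have hdisj : Pairwise (Function.onFun Disjoint fun n => Cf (seq n)) := by
    have key : ∀ m n, m < n → Disjoint (Cf (seq m)) (Cf (seq n)) := by
      intro m n hmn
      exact Set.disjoint_of_subset ((hsub m).trans (hmono hmn)) (hCf2 (seq n))
        disjoint_sdiff_right
    intro m n hmn
    rcases lt_or_gt_of_ne hmn with h | h
    · exact key m n h
    · exact (key n m h).symm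
  have htsum : (∑' n : ℕ, P (Cf (seq n))) ≤ 1 := by
    calc (∑' n : ℕ, P (Cf (seq n))) ≤ P (⋃ n, Cf (seq n)) :=
      tsum_meas_le_meas_iUnion_of_disjoint P (fun n => hCf1 (seq n)) hdisj
    _ ≤ 1 := prob_le_one
  have hne : P C / 2 ≠ 0 := by
    simp only [ne_eq, ENNReal.div_eq_zero_iff]
    push_neg
    exact ⟨h0C.ne', ENNReal.ofNat_ne_top⟩
  have hbot : (⊤ : ℝ≥0∞) ≤ ∑' n : ℕ, P (Cf (seq n)) := by
    rw [← ENNReal.tsum_const_eq_top_of_ne_zero (α := ℕ) hne]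
    refine ENNReal.tsum_le_tsum fun n => ?_
    exact ENNReal.div_le_of_le_mul ((hadm n).trans_eq (mul_comm _ _))
  exact absurd (hbot.trans htsum) (by simp)

open Classical in
/-- a subset of half the measure -/
noncomputable def sHalf (P : Measure Ω) [IsProbabilityMeasure P] (hP : Atomless P) (E : Set Ω) : Set Ω :=
  if h : MeasurableSet E then
    (atomless_exists_subset hP h (ENNReal.half_le_self (a := P E))).choose else ∅

lemma sHalf_meas (hP : Atomless P) (E : Set Ω) : MeasurableSet (sHalf P hP E) := by
  rw [sHalf]
  split_ifs with h
  · exact (atomless_exists_subset hP h (ENNReal.half_le_self (a := P E))).choose_spec.1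
  · exact MeasurableSet.empty

lemma sHalf_subset (hP : Atomless P) (E : Set Ω) : sHalf P hP E ⊆ E := by
  rw [sHalf]
  split_ifs with h
  · exact (atomless_exists_subset hP h (ENNReal.half_le_self (a := P E))).choose_spec.2.1
  · exact empty_subset _

lemma sHalf_measure (hP : Atomless P) {E : Set Ω} (h : MeasurableSet E) :
    P (sHalf P hP E) = P E / 2 := by
  rw [sHalf, dif_pos h]
  exact (atomless_exists_subset hP h (ENNReal.half_le_self (a := P E))).choose_spec.2.2

variable (P) in
/-- dyadic filtration of `A` : `dyad P hP A n k` has measure `(k/2^n) * P A` for `k ≤ 2^n`. -/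
noncomputable def dyad (hP : Atomless P) (A : Set Ω) : ℕ → ℕ → Set Ω
  | 0, k => if k = 0 then ∅ else A
  | n+1, k =>
      if k % 2 = 0 then dyad hP A n (k / 2)
      else dyad hP A n (k / 2) ∪
        sHalf P hP (dyad hP A n (k / 2 + 1) \ dyad hP A n (k / 2))

variable (hP : Atomless P) {A : Set Ω}

lemma dyad_zero : dyad P hP A 0 0 = ∅ := by simp [dyad]

lemma dyad_meas (hA : MeasurableSet A) : ∀ n k, MeasurableSet (dyad P hP A n k) := by
  intro n
  induction n with
  | zero => intro k; rw [dyad]; split_ifs <;> simp [hA]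
  | succ n ih =>
    intro k
    rw [dyad]
    split_ifs with h
    · exact ih _
    · exact (ih _).union (sHalf_meas hP _)

lemma dyad_subset : ∀ n k, dyad P hP A n k ⊆ A := by
  intro n
  induction n with
  | zero => intro k; rw [dyad]; split_ifs <;> simp
  | succ n ih =>
    intro k
    rw [dyad]
    split_ifs with h
    · exact ih _
    · exact union_subset (ih _)
        (((sHalf_subset hP _).trans diff_subset).trans (ih _))

lemma dyad_mono_step : ∀ n k, dyad P hP A n k ⊆ dyad P hP A n (k + 1) := by
  intro n
  induction n with
  | zero =>
    intro k
    rw [dyad, dyad]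
    split_ifs with h1 h2 <;> simp_all
  | succ n ih =>
    intro k
    rcases Nat.even_or_odd k with ⟨j, hj⟩ | ⟨j, hj⟩
    · subst hj
      rw [dyad, dyad]
      have h1 : (j + j) % 2 = 0 := by omega
      have h2 : ¬((j + j + 1) % 2 = 0) := by omega
      have h3 : (j + j) / 2 = j := by omega
      have h4 : (j + j + 1) / 2 = j := by omega
      rw [if_pos h1, if_neg h2, h3, h4]
      exact subset_union_left
    · subst hj
      rw [dyad, dyad]
      have h1 : ¬((2 * j + 1) % 2 = 0) := by omega
      have h2 : (2 * j + 1 + 1) % 2 = 0 := by omega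
      have h3 : (2 * j + 1) / 2 = j := by omega
      have h4 : (2 * j + 1 + 1) / 2 = j + 1 := by omega
      rw [if_neg h1, if_pos h2, h3, h4]
      exact union_subset (ih j) ((sHalf_subset hP _).trans diff_subset)

lemma dyad_mono {n k k' : ℕ} (h : k ≤ k') : dyad P hP A n k ⊆ dyad P hP A n k' := by
  induction k' with
  | zero => rw [Nat.le_zero.1 h]
  | succ m ih =>
    rcases Nat.lt_or_ge k (m+1) with h' | h'
    · exact (ih (by omega)).trans (dyad_mono_step hP n m)
    · have : k = m + 1 := by omega
      rw [this]

lemma dyad_full : ∀ n k, 2 ^ n ≤ k → dyad P hP A n k = A := by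
  intro n
  induction n with
  | zero => intro k hk; rw [dyad, if_neg (by omega)]
  | succ n ih =>
    intro k hk
    have hk2 : 2 ^ n ≤ k / 2 := by
      rcases Nat.even_or_odd k with ⟨j, hj⟩ | ⟨j, hj⟩ <;> subst hj <;> rw [pow_succ] at hk <;> omega
    rw [dyad]
    split_ifs with h
    · exact ih _ hk2
    · rw [ih _ hk2]
      refine subset_antisymm (union_subset subset_rfl ?_) subset_union_left
      exact (sHalf_subset hP _).trans (diff_subset.trans (dyad_subset hP n _))

lemma dyad_shift : ∀ m n k, dyad P hP A n k = dyad P hP A (n + m) (k * 2 ^ m) := by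
  intro m
  induction m with
  | zero => intro n k; simp
  | succ m ih =>
    intro n k
    rw [ih n k]
    have : dyad P hP A (n + m + 1) (k * 2 ^ (m+1)) = dyad P hP A (n + m) (k * 2 ^ m) := by
      rw [dyad]
      have h1 : (k * 2 ^ (m+1)) % 2 = 0 := by
        rw [pow_succ, ← mul_assoc]; exact Nat.mul_mod_left _ 2
      have h2 : k * 2 ^ (m+1) / 2 = k * 2 ^ m := by
        rw [pow_succ, ← mul_assoc]; exact Nat.mul_div_cancel _ two_pos
      rw [if_pos h1, h2]
    rw [show n + (m + 1) = n + m + 1 from rfl, this]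

lemma dyad_measure (hA : MeasurableSet A) :
    ∀ n k, k ≤ 2 ^ n → P (dyad P hP A n k) = k * P A * 2⁻¹ ^ n := by
  have h2 : (2 : ℝ≥0∞) * 2⁻¹ = 1 :=
    ENNReal.mul_inv_cancel (by norm_num) (by norm_num)
  intro n
  induction n with
  | zero =>
    intro k hk
    interval_cases k
    · simp [dyad]
    · simp [dyad]
  | succ n ih =>
    intro k hk
    rcases Nat.even_or_odd k with ⟨j, hj⟩ | ⟨j, hj⟩
    · -- even
      subst hj
      have hj2 : j ≤ 2 ^ n := by rw [pow_succ] at hk; omega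
      rw [dyad, if_pos (by omega), show (j + j) / 2 = j by omega, ih j hj2]
      push_cast
      rw [pow_succ]
      calc (j : ℝ≥0∞) * P A * 2⁻¹ ^ n
          = (j : ℝ≥0∞) * P A * 2⁻¹ ^ n * (2 * 2⁻¹) := by rw [h2, mul_one]
      _ = ((j : ℝ≥0∞) + j) * P A * (2⁻¹ ^ n * 2⁻¹) := by ring
    · -- odd
      subst hj
      have hj2 : j + 1 ≤ 2 ^ n := by rw [pow_succ] at hk; omega
      have hj1 : j ≤ 2 ^ n := by omega
      rw [dyad, if_neg (by omega), show (2 * j + 1) / 2 = j by omega]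
      have hC := dyad_meas hP hA n j
      have hD := dyad_meas hP hA n (j+1)
      have hCD : dyad P hP A n j ⊆ dyad P hP A n (j+1) := dyad_mono_step hP n j
      have hdiff : P (dyad P hP A n (j+1) \ dyad P hP A n j) = P A * 2⁻¹ ^ n := by
        rw [measure_diff hCD hC.nullMeasurableSet (measure_ne_top P _), ih _ hj2, ih _ hj1]
        push_cast
        rw [add_mul, add_mul, one_mul]
        exact ENNReal.add_sub_cancel_left
          (ENNReal.mul_ne_top (ENNReal.mul_ne_top (ENNReal.natCast_ne_top j)
            (measure_ne_top P A)) (by simp [ENNReal.inv_ne_top]))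
      have hhalf : P (sHalf P hP (dyad P hP A n (j+1) \ dyad P hP A n j))
          = P A * 2⁻¹ ^ (n+1) := by
        rw [sHalf_measure hP (hD.diff hC), hdiff, pow_succ, div_eq_mul_inv]
        ring
      rw [measure_union ?_ (sHalf_meas hP _), ih j hj1, hhalf]
      · push_cast
        rw [pow_succ]
        calc (j : ℝ≥0∞) * P A * 2⁻¹ ^ n + P A * (2⁻¹ ^ n * 2⁻¹)
            = (j : ℝ≥0∞) * P A * 2⁻¹ ^ n * (2 * 2⁻¹) + P A * (2⁻¹ ^ n * 2⁻¹) := by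
              rw [h2, mul_one]
        _ = (2 * (j : ℝ≥0∞) + 1) * P A * (2⁻¹ ^ n * 2⁻¹) := by ring
      · exact (Set.disjoint_sdiff_right).mono_right (sHalf_subset hP _)


variable (P) in
/-- A uniform random variable living on `A`. -/
noncomputable def unifV (hP : Atomless P) (A : Set Ω) : Ω → ℝ :=
  fun ω => sInf ({1} ∪ {x : ℝ | ∃ n k : ℕ, ω ∈ dyad P hP A n k ∧ x = k / 2 ^ n})

lemma unifV_set_nonempty (ω : Ω) :
    ({1} ∪ {x : ℝ | ∃ n k : ℕ, ω ∈ dyad P hP A n k ∧ x = k / 2 ^ n}).Nonempty :=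
  ⟨1, Or.inl rfl⟩

lemma unifV_set_bdd (ω : Ω) :
    BddBelow ({1} ∪ {x : ℝ | ∃ n k : ℕ, ω ∈ dyad P hP A n k ∧ x = k / 2 ^ n}) := by
  refine ⟨0, fun x hx => ?_⟩
  rcases hx with h | ⟨n, k, _, rfl⟩
  · simp at h; simp [h]
  · positivity

lemma unifV_nonneg (ω : Ω) : 0 ≤ unifV P hP A ω := by
  refine le_csInf (unifV_set_nonempty hP ω) fun x hx => ?_
  rcases hx with h | ⟨n, k, _, rfl⟩
  · simp at h; simp [h]
  · positivity

lemma unifV_le_one (ω : Ω) : unifV P hP A ω ≤ 1 :=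
  csInf_le (unifV_set_bdd hP ω) (Or.inl rfl)

lemma unifV_le_of_mem {ω : Ω} {n k : ℕ} (h : ω ∈ dyad P hP A n k) :
    unifV P hP A ω ≤ k / 2 ^ n :=
  csInf_le (unifV_set_bdd hP ω) (Or.inr ⟨n, k, h, rfl⟩)

lemma unifV_mem_of_lt {ω : Ω} (hω : ω ∈ A) {r : ℝ} (h : unifV P hP A ω ≤ r)
    {n k : ℕ} (hr : r < (k : ℝ) / 2 ^ n) : ω ∈ dyad P hP A n k := by
  obtain ⟨x, hx, hxlt⟩ := exists_lt_of_csInf_lt (unifV_set_nonempty hP ω) (lt_of_le_of_lt h hr)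
  rcases hx with h1 | ⟨m, j, hmem, rfl⟩
  · simp only [mem_singleton_iff] at h1
    subst h1
    have h2n : (2:ℝ) ^ n < k := (one_lt_div (by positivity)).1 hxlt
    have : 2 ^ n ≤ k := by exact_mod_cast (by push_cast; linarith : ((2^n : ℕ) : ℝ) < k).le
    rw [dyad_full hP n k this]
    exact hω
  · have hjk : j * 2 ^ n ≤ k * 2 ^ m := by
      have : (j : ℝ) * 2 ^ n < k * 2 ^ m := by
        rw [div_lt_div_iff₀ (by positivity) (by positivity)] at hxlt
        exact hxlt
      have := this.le
      exact_mod_cast (by push_cast; exact this : ((j * 2 ^ n : ℕ) : ℝ) ≤ (k * 2 ^ m : ℕ))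
    have e1 : dyad P hP A m j = dyad P hP A (m + n) (j * 2 ^ n) := dyad_shift hP n m j
    have e2 : dyad P hP A n k = dyad P hP A (m + n) (k * 2 ^ m) := by
      rw [dyad_shift hP m n k, Nat.add_comm n m]
    rw [e2]
    rw [e1] at hmem
    exact dyad_mono hP hjk hmem

lemma unifV_measurable (hA : MeasurableSet A) : Measurable (unifV P hP A) := by
  refine measurable_of_Iio fun r => ?_
  have : unifV P hP A ⁻¹' Iio r =
      (⋃ p : ℕ × ℕ, if ((p.2 : ℝ) / 2 ^ p.1 < r) then dyad P hP A p.1 p.2 else ∅) ∪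
        (if (1:ℝ) < r then univ else ∅) := by
    ext ω
    simp only [mem_preimage, mem_Iio, mem_union, mem_iUnion]
    constructor
    · intro hlt
      obtain ⟨x, hx, hxlt⟩ := exists_lt_of_csInf_lt (unifV_set_nonempty hP ω) hlt
      rcases hx with h1 | ⟨n, k, hmem, rfl⟩
      · simp only [mem_singleton_iff] at h1
        subst h1
        right
        rw [if_pos hxlt]
        trivial
      · left
        exact ⟨⟨n, k⟩, by rw [if_pos hxlt]; exact hmem⟩
    · rintro (⟨⟨n, k⟩, hmem⟩ | hone)
      · by_cases hc : (k : ℝ) / 2 ^ n < r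
        · rw [if_pos hc] at hmem
          exact lt_of_le_of_lt (unifV_le_of_mem hP hmem) hc
        · rw [if_neg hc] at hmem
          exact absurd hmem (notMem_empty ω)
      · by_cases hc : (1:ℝ) < r
        · exact lt_of_le_of_lt (unifV_le_one hP ω) hc
        · rw [if_neg hc] at hone
          exact absurd hone (notMem_empty ω)
  rw [this]
  refine MeasurableSet.union (MeasurableSet.iUnion fun p => ?_) ?_
  · split_ifs
    · exact dyad_meas hP hA p.1 p.2
    · exact MeasurableSet.empty
  · split_ifs <;> simp

lemma unifV_Iic_measure (hA : MeasurableSet A) {r : ℝ} (hr0 : 0 ≤ r) (hr1 : r ≤ 1) :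
    P (A ∩ {ω | unifV P hP A ω ≤ r}) = ENNReal.ofReal r * P A := by
  rcases eq_or_lt_of_le hr1 with rfl | hr1
  · have : A ∩ {ω | unifV P hP A ω ≤ 1} = A := by
      refine inter_eq_left.2 fun ω _ => unifV_le_one hP ω
    rw [this]
    simp
  -- now r < 1
  set q : ℝ≥0∞ := P (A ∩ {ω | unifV P hP A ω ≤ r}) with hq
  have hqfin : q ≠ ∞ := measure_ne_top P _
  set pR : ℝ := (P A).toReal with hpR
  have hp0 : 0 ≤ pR := ENNReal.toReal_nonneg
  have hp1 : pR ≤ 1 := by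
    rw [hpR]
    exact ENNReal.toReal_le_of_le_ofReal one_pos.le (by simpa using prob_le_one)
  have key : ∀ n : ℕ, (⌊r * 2 ^ n⌋₊ : ℝ) * pR * (1/2) ^ n ≤ q.toReal ∧
      q.toReal ≤ ((⌊r * 2 ^ n⌋₊ : ℝ) + 1) * pR * (1/2) ^ n := by
    intro n
    set k : ℕ := ⌊r * 2 ^ n⌋₊ with hk
    have hkle : (k : ℝ) ≤ r * 2 ^ n := Nat.floor_le (by positivity)
    have hklt : r * 2 ^ n < (k : ℝ) + 1 := Nat.lt_floor_add_one _
    have hk2 : k ≤ 2 ^ n := by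
      have : (k:ℝ) ≤ 2 ^ n := hkle.trans
        (by nlinarith [pow_pos (by norm_num : (0:ℝ) < 2) n])
      exact_mod_cast (by push_cast; exact this : (k:ℝ) ≤ ((2^n : ℕ) : ℝ))
    have hk2' : k + 1 ≤ 2 ^ n := by
      have : (k:ℝ) < 2 ^ n := lt_of_le_of_lt hkle
        (by nlinarith [pow_pos (by norm_num : (0:ℝ) < 2) n])
      have : k < 2 ^ n := by exact_mod_cast (by push_cast; exact this : (k:ℝ) < ((2^n:ℕ):ℝ))
      omega
    have hmeasval : ∀ j : ℕ, j ≤ 2 ^ n →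
        (P (dyad P hP A n j)).toReal = (j : ℝ) * pR * (1/2) ^ n := by
      intro j hj
      rw [dyad_measure hP hA n j hj]
      simp [ENNReal.toReal_mul, ENNReal.toReal_pow, ENNReal.toReal_inv, hpR]
    constructor
    · -- lower bound
      have hsub : dyad P hP A n k ⊆ A ∩ {ω | unifV P hP A ω ≤ r} := by
        intro ω hω
        refine ⟨dyad_subset hP n k hω, ?_⟩
        refine (unifV_le_of_mem hP hω).trans ?_
        rw [div_le_iff₀ (by positivity)]
        linarith
      have := measure_mono (μ := P) hsub
      have h' := ENNReal.toReal_mono hqfin this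
      rw [hmeasval k hk2] at h'
      exact h'
    · -- upper bound
      have hsub : A ∩ {ω | unifV P hP A ω ≤ r} ⊆ dyad P hP A n (k+1) := by
        rintro ω ⟨hωA, hωr⟩
        refine unifV_mem_of_lt hP hωA hωr ?_
        rw [lt_div_iff₀ (by positivity)]
        push_cast
        linarith
      have := measure_mono (μ := P) hsub
      have h' := ENNReal.toReal_mono (measure_ne_top P _) this
      rw [hmeasval (k+1) hk2'] at h'
      push_cast at h' ⊢
      linarith
  have htendlow : Filter.Tendsto (fun n : ℕ => r * pR - (1/2)^n) Filter.atTop (nhds (r * pR)) := by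
    have := tendsto_pow_atTop_nhds_zero_of_lt_one (by norm_num : (0:ℝ) ≤ 1/2) (by norm_num)
    simpa using (Filter.Tendsto.const_sub (r * pR) this)
  have htendhigh : Filter.Tendsto (fun n : ℕ => r * pR + (1/2)^n) Filter.atTop (nhds (r * pR)) := by
    have := tendsto_pow_atTop_nhds_zero_of_lt_one (by norm_num : (0:ℝ) ≤ 1/2) (by norm_num)
    simpa using (Filter.Tendsto.const_add (r * pR) this)
  have hle : q.toReal ≤ r * pR := by
    refine ge_of_tendsto htendhigh (Filter.Eventually.of_forall fun n => ?_)
    have h2 := (key n).2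
    have hkle : (⌊r * 2 ^ n⌋₊ : ℝ) ≤ r * 2 ^ n := Nat.floor_le (by positivity)
    have hpow : ((1:ℝ)/2) ^ n * 2 ^ n = 1 := by
      rw [div_pow, one_pow]
      field_simp
    have hcpos : (0:ℝ) < (1/2) ^ n := by positivity
    have step1 : ((⌊r * 2 ^ n⌋₊ : ℝ) + 1) * pR * (1/2)^n ≤ (r * 2^n + 1) * pR * (1/2)^n :=
      mul_le_mul_of_nonneg_right (mul_le_mul_of_nonneg_right
        (by linarith : (⌊r * 2 ^ n⌋₊ : ℝ) + 1 ≤ r * 2 ^ n + 1) hp0) hcpos.le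
    have step2 : (r * 2^n + 1) * pR * (1/2)^n = r * pR + pR * (1/2)^n := by
      linear_combination r * pR * hpow
    have step3 : pR * (1/2)^n ≤ (1/2)^n := mul_le_of_le_one_left hcpos.le hp1
    linarith
  have hge : r * pR ≤ q.toReal := by
    refine le_of_tendsto htendlow (Filter.Eventually.of_forall fun n => ?_)
    have h1 := (key n).1
    have hklt : r * 2 ^ n < (⌊r * 2 ^ n⌋₊ : ℝ) + 1 := Nat.lt_floor_add_one _
    have hpow : ((1:ℝ)/2) ^ n * 2 ^ n = 1 := by
      rw [div_pow, one_pow]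
      field_simp
    have hcpos : (0:ℝ) < (1/2) ^ n := by positivity
    have step1 : (r * 2 ^ n - 1) * pR * (1/2)^n ≤ (⌊r * 2 ^ n⌋₊ : ℝ) * pR * (1/2)^n :=
      mul_le_mul_of_nonneg_right (mul_le_mul_of_nonneg_right
        (by linarith : r * 2 ^ n - 1 ≤ (⌊r * 2 ^ n⌋₊ : ℝ)) hp0) hcpos.le
    have step2 : (r * 2 ^ n - 1) * pR * (1/2)^n = r * pR - pR * (1/2)^n := by
      linear_combination r * pR * hpow
    have step3 : pR * (1/2)^n ≤ (1/2)^n := mul_le_of_le_one_left hcpos.le hp1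
    linarith
  have : q.toReal = r * pR := le_antisymm hle hge
  rw [← ENNReal.ofReal_toReal hqfin, this, ENNReal.ofReal_mul hr0, hpR,
    ENNReal.ofReal_toReal (measure_ne_top P A)]

lemma unifV_eq_one_null (hA : MeasurableSet A) :
    P (A ∩ {ω | unifV P hP A ω = 1}) = 0 := by
  have hbound : ∀ n : ℕ, (P (A ∩ {ω | unifV P hP A ω = 1})).toReal ≤ (1/2) ^ n := by
    intro n
    have hc : (0:ℝ) < (1/2)^n := by positivity
    have hc1 : ((1:ℝ)/2)^n ≤ 1 := pow_le_one₀ (by norm_num) (by norm_num)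
    set r : ℝ := 1 - (1/2)^n with hr
    have hr0 : 0 ≤ r := by rw [hr]; linarith
    have hr1 : r ≤ 1 := by rw [hr]; linarith
    have hsub : A ∩ {ω | unifV P hP A ω = 1} ⊆ A \ (A ∩ {ω | unifV P hP A ω ≤ r}) := by
      rintro ω ⟨hωA, hω1⟩
      refine ⟨hωA, fun hmem => ?_⟩
      have h2 := hmem.2
      simp only [mem_setOf_eq] at h2 hω1
      rw [hω1, hr] at h2
      linarith
    have hmeas : MeasurableSet (A ∩ {ω | unifV P hP A ω ≤ r}) :=
      hA.inter (measurableSet_le (unifV_measurable hP hA) measurable_const)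
    have hdiff : P (A \ (A ∩ {ω | unifV P hP A ω ≤ r}))
        = P A - P (A ∩ {ω | unifV P hP A ω ≤ r}) :=
      measure_diff inter_subset_left hmeas.nullMeasurableSet (measure_ne_top P _)
    have hmono := measure_mono (μ := P) hsub
    rw [hdiff, unifV_Iic_measure hP hA hr0 hr1] at hmono
    have hle' : ENNReal.ofReal r * P A ≤ P A := by
      calc ENNReal.ofReal r * P A ≤ 1 * P A := by
            gcongr
            exact ENNReal.ofReal_le_one.2 hr1
      _ = P A := one_mul _
    have h2 := ENNReal.toReal_mono
      (ne_top_of_le_ne_top (measure_ne_top P A) tsub_le_self) hmono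
    rw [ENNReal.toReal_sub_of_le hle' (measure_ne_top P A), ENNReal.toReal_mul,
      ENNReal.toReal_ofReal hr0] at h2
    set pR : ℝ := (P A).toReal with hpR
    have hp0 : 0 ≤ pR := ENNReal.toReal_nonneg
    have hp1 : pR ≤ 1 := by simpa using ENNReal.toReal_mono ENNReal.one_ne_top prob_le_one
    calc (P (A ∩ {ω | unifV P hP A ω = 1})).toReal ≤ pR - r * pR := h2
    _ = pR * (1/2)^n := by rw [hr]; ring
    _ ≤ (1/2)^n := by nlinarith
  have h0 : (P (A ∩ {ω | unifV P hP A ω = 1})).toReal ≤ 0 :=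
    ge_of_tendsto (tendsto_pow_atTop_nhds_zero_of_lt_one (by norm_num) (by norm_num))
      (Filter.Eventually.of_forall hbound)
  have heq := le_antisymm h0 ENNReal.toReal_nonneg
  rcases (ENNReal.toReal_eq_zero_iff _).1 heq with h | h
  · exact h
  · exact absurd h (measure_ne_top P _)

end AuxSierpinski

section
variable {Ω : Type*} [MeasurableSpace Ω] (P : Measure Ω) [IsProbabilityMeasure P]
  {S : Ω → ℝ}

lemma VaR_eq_of {s t : ℝ} (hle : t ≤ (P {ω | S ω ≤ s}).toReal)
    (hlt : ∀ x, x < s → (P {ω | S ω ≤ x}).toReal < t) : VaR P S t = s := by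
  have hlb : ∀ x ∈ {x : ℝ | t ≤ (P {ω | S ω ≤ x}).toReal}, s ≤ x := by
    intro x hx
    by_contra h
    push_neg at h
    exact absurd hx (not_le.2 (hlt x h))
  exact le_antisymm (csInf_le ⟨s, hlb⟩ hle) (le_csInf ⟨s, hle⟩ hlb)

variable (hS : Measurable S)
include hS

lemma null_flat (q : ℝ) :
    P {ω | q < S ω ∧ P {ω' | S ω' ≤ S ω} ≤ P {ω' | S ω' ≤ q}} = 0 := by
  have hGmono : Monotone fun x => P {ω | S ω ≤ x} :=
    fun x y hxy => measure_mono (fun ω h => le_trans h hxy)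
  set C : Set ℝ := {x | q < x ∧ P {ω | S ω ≤ x} ≤ P {ω | S ω ≤ q}} with hC
  have hmemC : ∀ ω, q < S ω → P {ω' | S ω' ≤ S ω} ≤ P {ω' | S ω' ≤ q} → S ω ∈ C :=
    fun ω h1 h2 => ⟨h1, h2⟩
  have hIoc : ∀ x ∈ C, P {ω | q < S ω ∧ S ω ≤ x} = 0 := by
    intro x hx
    have hset : {ω | q < S ω ∧ S ω ≤ x} = {ω | S ω ≤ x} \ {ω | S ω ≤ q} := by
      ext ω
      simp only [mem_setOf_eq, mem_diff, not_le]
      constructor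
      · rintro ⟨h1, h2⟩; exact ⟨h2, h1⟩
      · rintro ⟨h1, h2⟩; exact ⟨h2, h1⟩
    have hsub' : {ω | S ω ≤ q} ⊆ {ω | S ω ≤ x} := by
      intro ω h
      simp only [mem_setOf_eq] at h ⊢
      linarith [hx.1]
    rw [hset, measure_diff hsub' (hS measurableSet_Iic).nullMeasurableSet (measure_ne_top P _)]
    exact tsub_eq_zero_of_le hx.2
  by_cases hCne : C.Nonempty
  · by_cases hbdd : BddAbove C
    · set m := sSup C with hm
      by_cases hmC : m ∈ C
      · refine measure_mono_null (fun ω hω => ?_) (hIoc m hmC)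
        exact ⟨hω.1, le_csSup hbdd (hmemC ω hω.1 hω.2)⟩
      · have hsub : {ω | q < S ω ∧ P {ω' | S ω' ≤ S ω} ≤ P {ω' | S ω' ≤ q}} ⊆
            ⋃ n : ℕ, {ω | q < S ω ∧ S ω ≤ m - 1/(n+1)} := by
          intro ω hω
          have hSC := hmemC ω hω.1 hω.2
          have hlt : S ω < m := lt_of_le_of_ne (le_csSup hbdd hSC) (fun h => hmC (h ▸ hSC))
          obtain ⟨n, hn⟩ := exists_nat_one_div_lt (by linarith : (0:ℝ) < m - S ω)
          exact mem_iUnion.2 ⟨n, hω.1, by push_cast at hn ⊢; linarith⟩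
        refine measure_mono_null hsub (measure_iUnion_null fun n => ?_)
        by_cases hq : q < m - 1/((n:ℝ)+1)
        · refine hIoc _ ⟨hq, ?_⟩
          have hlt' : m - 1/((n:ℝ)+1) < m := by
            have : (0:ℝ) < 1/((n:ℝ)+1) := by positivity
            linarith
          obtain ⟨c, hcC, hc⟩ := exists_lt_of_lt_csSup hCne (hm ▸ hlt')
          exact (hGmono hc.le).trans hcC.2
        · have hempty : {ω | q < S ω ∧ S ω ≤ m - 1/((n:ℝ)+1)} = ∅ :=
            eq_empty_iff_forall_notMem.2 fun ω hω => hq (lt_of_lt_of_le hω.1 hω.2)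
          rw [hempty]
          exact measure_empty
    · rw [not_bddAbove_iff] at hbdd
      have hg : ∀ n : ℕ, ∃ y ∈ C, (n:ℝ) < y := fun n => hbdd n
      choose g hg1 hg2 using hg
      have hsub : {ω | q < S ω ∧ P {ω' | S ω' ≤ S ω} ≤ P {ω' | S ω' ≤ q}} ⊆
          ⋃ n : ℕ, {ω | q < S ω ∧ S ω ≤ g n} := by
        intro ω hω
        obtain ⟨n, hn⟩ := exists_nat_ge (S ω)
        exact mem_iUnion.2 ⟨n, hω.1, hn.trans (hg2 n).le⟩
      exact measure_mono_null hsub (measure_iUnion_null fun n => hIoc _ (hg1 n))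
  · rw [not_nonempty_iff_eq_empty] at hCne
    refine measure_mono_null (fun ω hω => ?_) (measure_empty (μ := P) (α := Ω))
    exact absurd (hmemC ω hω.1 hω.2) (by rw [hCne]; simp)

lemma exists_cdf_gt {t : ℝ} (ht : t < 1) : ∃ x : ℝ, t < (P {ω | S ω ≤ x}).toReal := by
  rcases lt_or_ge t 0 with ht0 | ht0
  · exact ⟨0, lt_of_lt_of_le ht0 ENNReal.toReal_nonneg⟩
  have hmono : Monotone fun n : ℕ => {ω | S ω ≤ (n:ℝ)} := by
    intro a b hab
    have hab' : (a:ℝ) ≤ b := by exact_mod_cast hab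
    intro ω h
    simp only [mem_setOf_eq] at h ⊢
    linarith
  have hunion : ⋃ n : ℕ, {ω | S ω ≤ (n:ℝ)} = univ := by
    ext ω
    simp only [mem_iUnion, mem_setOf_eq, mem_univ, iff_true]
    exact exists_nat_ge (S ω)
  have htend : Filter.Tendsto (fun n : ℕ => P {ω | S ω ≤ (n:ℝ)}) Filter.atTop
      (nhds (P (⋃ n : ℕ, {ω | S ω ≤ (n:ℝ)}))) := tendsto_measure_iUnion_atTop hmono
  rw [hunion, measure_univ] at htend
  have hlt : ENNReal.ofReal t < 1 := ENNReal.ofReal_lt_one.2 ht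
  obtain ⟨n, hn⟩ := (htend.eventually (lt_mem_nhds hlt)).exists
  exact ⟨n, by
    rw [← ENNReal.ofReal_lt_iff_lt_toReal ht0 (measure_ne_top P _)] at *
    exact hn⟩

lemma exists_cdf_lt {t : ℝ} (ht : 0 < t) : ∃ x : ℝ, (P {ω | S ω ≤ x}).toReal < t := by
  have hanti : Antitone fun n : ℕ => {ω | S ω ≤ -(n:ℝ)} := by
    intro a b hab
    have hab' : (a:ℝ) ≤ b := by exact_mod_cast hab
    intro ω h
    simp only [mem_setOf_eq] at h ⊢
    linarith
  have hinter : ⋂ n : ℕ, {ω | S ω ≤ -(n:ℝ)} = ∅ := by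
    ext ω
    simp only [mem_iInter, mem_setOf_eq, mem_empty_iff_false, iff_false, not_forall]
    obtain ⟨n, hn⟩ := exists_nat_gt (-(S ω))
    exact ⟨n, by push_neg; linarith⟩
  have htend : Filter.Tendsto (fun n : ℕ => P {ω | S ω ≤ -(n:ℝ)}) Filter.atTop
      (nhds (P (⋂ n : ℕ, {ω | S ω ≤ -(n:ℝ)}))) :=
    tendsto_measure_iInter_atTop
      (fun n => (hS measurableSet_Iic).nullMeasurableSet) hanti ⟨0, measure_ne_top P _⟩
  rw [hinter, measure_empty] at htend
  have hlt : (0:ℝ≥0∞) < ENNReal.ofReal t := ENNReal.ofReal_pos.2 ht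
  obtain ⟨n, hn⟩ := (htend.eventually (gt_mem_nhds hlt)).exists
  exact ⟨-(n:ℝ), ENNReal.toReal_lt_of_lt_ofReal hn⟩

lemma le_cdf_VaR {t : ℝ} (ht0 : 0 < t) (ht1 : t < 1) :
    t ≤ (P {ω | S ω ≤ VaR P S t}).toReal := by
  set M : Set ℝ := {x | t ≤ (P {ω | S ω ≤ x}).toReal} with hM
  obtain ⟨x0, hx0⟩ := exists_cdf_gt P hS ht1
  obtain ⟨x1, hx1⟩ := exists_cdf_lt P hS ht0
  have hMne : M.Nonempty := ⟨x0, hx0.le⟩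
  have hGmono : Monotone fun x => P {ω | S ω ≤ x} :=
    fun x y hxy => measure_mono (fun ω h => le_trans h hxy)
  have hMbdd : BddBelow M := by
    refine ⟨x1, fun y hy => ?_⟩
    by_contra h
    push_neg at h
    have : (P {ω | S ω ≤ y}).toReal ≤ (P {ω | S ω ≤ x1}).toReal :=
      ENNReal.toReal_mono (measure_ne_top P _) (hGmono h.le)
    exact absurd hy (not_le.2 (lt_of_le_of_lt this hx1))
  set q : ℝ := VaR P S t with hq
  have hqinf : q = sInf M := rfl
  -- {S ≤ q} as a decreasing intersection
  have hinter : ⋂ n : ℕ, {ω | S ω ≤ q + 1/(n+1)} = {ω | S ω ≤ q} := by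
    ext ω
    simp only [mem_iInter, mem_setOf_eq]
    constructor
    · intro h
      by_contra hc
      push_neg at hc
      obtain ⟨n, hn⟩ := exists_nat_one_div_lt (by linarith : (0:ℝ) < S ω - q)
      have := h n
      push_cast at hn this
      linarith
    · intro h n
      have : (0:ℝ) < 1/((n:ℝ)+1) := by positivity
      push_cast
      linarith
  have hanti : Antitone fun n : ℕ => {ω | S ω ≤ q + 1/(n+1)} := by
    intro a b hab
    have hab' : (a:ℝ) ≤ b := by exact_mod_cast hab
    have hba : 1/((b:ℝ)+1) ≤ 1/((a:ℝ)+1) :=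
      one_div_le_one_div_of_le (by positivity) (by linarith)
    intro ω h
    simp only [mem_setOf_eq] at h ⊢
    linarith
  have htend : Filter.Tendsto (fun n : ℕ => P {ω | S ω ≤ q + 1/(n+1)}) Filter.atTop
      (nhds (P (⋂ n : ℕ, {ω | S ω ≤ q + 1/(n+1)}))) :=
    tendsto_measure_iInter_atTop
      (fun n => (hS measurableSet_Iic).nullMeasurableSet) hanti ⟨0, measure_ne_top P _⟩
  rw [hinter] at htend
  have hbound : ∀ n : ℕ, ENNReal.ofReal t ≤ P {ω | S ω ≤ q + 1/(n+1)} := by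
    intro n
    have hq' : sInf M < q + 1/((n:ℝ)+1) := by
      rw [← hqinf]
      have : (0:ℝ) < 1/((n:ℝ)+1) := by positivity
      linarith
    obtain ⟨x, hxM, hxlt⟩ := exists_lt_of_csInf_lt hMne hq'
    calc ENNReal.ofReal t ≤ P {ω | S ω ≤ x} :=
        ENNReal.ofReal_le_of_le_toReal hxM
    _ ≤ _ := hGmono hxlt.le
  have hfin := ge_of_tendsto htend (Filter.Eventually.of_forall hbound)
  rw [← ENNReal.ofReal_le_iff_le_toReal (measure_ne_top P _)]
  exact hfin

lemma cdfm_VaR_le {t : ℝ} (ht0 : 0 < t) (ht1 : t < 1) :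
    (P {ω | S ω < VaR P S t}).toReal ≤ t := by
  set M : Set ℝ := {x | t ≤ (P {ω | S ω ≤ x}).toReal} with hM
  obtain ⟨x0, hx0⟩ := exists_cdf_gt P hS ht1
  obtain ⟨x1, hx1⟩ := exists_cdf_lt P hS ht0
  have hMne : M.Nonempty := ⟨x0, hx0.le⟩
  have hGmono : Monotone fun x => P {ω | S ω ≤ x} :=
    fun x y hxy => measure_mono (fun ω h => le_trans h hxy)
  have hMbdd : BddBelow M := by
    refine ⟨x1, fun y hy => ?_⟩
    by_contra h
    push_neg at h
    have : (P {ω | S ω ≤ y}).toReal ≤ (P {ω | S ω ≤ x1}).toReal :=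
      ENNReal.toReal_mono (measure_ne_top P _) (hGmono h.le)
    exact absurd hy (not_le.2 (lt_of_le_of_lt this hx1))
  set q : ℝ := VaR P S t with hq
  have hunion : ⋃ n : ℕ, {ω | S ω ≤ q - 1/(n+1)} = {ω | S ω < q} := by
    ext ω
    simp only [mem_iUnion, mem_setOf_eq]
    constructor
    · rintro ⟨n, hn⟩
      have : (0:ℝ) < 1/((n:ℝ)+1) := by positivity
      push_cast at hn
      linarith
    · intro h
      obtain ⟨n, hn⟩ := exists_nat_one_div_lt (by linarith : (0:ℝ) < q - S ω)
      exact ⟨n, by push_cast at hn ⊢; linarith⟩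
  have hmono : Monotone fun n : ℕ => {ω | S ω ≤ q - 1/(n+1)} := by
    intro a b hab
    have hab' : (a:ℝ) ≤ b := by exact_mod_cast hab
    have hba : 1/((b:ℝ)+1) ≤ 1/((a:ℝ)+1) :=
      one_div_le_one_div_of_le (by positivity) (by linarith)
    intro ω h
    simp only [mem_setOf_eq] at h ⊢
    linarith
  have htend : Filter.Tendsto (fun n : ℕ => P {ω | S ω ≤ q - 1/(n+1)}) Filter.atTop
      (nhds (P (⋃ n : ℕ, {ω | S ω ≤ q - 1/(n+1)}))) := tendsto_measure_iUnion_atTop hmono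
  rw [hunion] at htend
  have hbound : ∀ n : ℕ, P {ω | S ω ≤ q - 1/(n+1)} ≤ ENNReal.ofReal t := by
    intro n
    have hnotM : q - 1/((n:ℝ)+1) ∉ M := by
      apply notMem_of_lt_csInf _ hMbdd
      have : (0:ℝ) < 1/((n:ℝ)+1) := by positivity
      have hqM : sInf M = q := rfl
      rw [hqM]
      linarith
    have hlt : (P {ω | S ω ≤ q - 1/((n:ℝ)+1)}).toReal < t := by
      by_contra h
      push_neg at h
      exact hnotM h
    exact le_of_lt ((ENNReal.lt_ofReal_iff_toReal_lt (measure_ne_top P _)).2 hlt)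
  have hfin := le_of_tendsto htend (Filter.Eventually.of_forall hbound)
  exact ENNReal.toReal_le_of_le_ofReal ht0.le hfin

end

set_option maxHeartbeats 2000000 in
theorem exists_uniform_quantile_representation {Ω : Type*} [MeasurableSpace Ω]
    (P : Measure Ω) [IsProbabilityMeasure P] (hP : Atomless P)
    (S : Ω → ℝ) (hS : Measurable S) :
    ∃ U : Ω → ℝ, Measurable U ∧ UniformOn01 P U ∧
      ∀ᵐ ω ∂P, S ω = VaR P S (U ω) := by
  classical
  -- basic cdf facts
  have hmIic : ∀ x : ℝ, MeasurableSet {ω | S ω ≤ x} := fun x => hS measurableSet_Iic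
  have hmIio : ∀ x : ℝ, MeasurableSet {ω | S ω < x} := fun x => hS measurableSet_Iio
  have hmSing : ∀ x : ℝ, MeasurableSet (S ⁻¹' {x}) := fun x => hS (measurableSet_singleton x)
  have hFmono : ∀ {x y : ℝ}, x ≤ y →
      (P {ω | S ω ≤ x}).toReal ≤ (P {ω | S ω ≤ y}).toReal := fun {x y} hxy =>
    ENNReal.toReal_mono (measure_ne_top P _)
      (measure_mono fun ω h => le_trans h hxy)
  have hFmmono : ∀ {x y : ℝ}, x ≤ y →
      (P {ω | S ω < x}).toReal ≤ (P {ω | S ω < y}).toReal := fun {x y} hxy =>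
    ENNReal.toReal_mono (measure_ne_top P _)
      (measure_mono fun ω h => lt_of_lt_of_le h hxy)
  have hFmF : ∀ {x y : ℝ}, x < y →
      (P {ω | S ω ≤ x}).toReal ≤ (P {ω | S ω < y}).toReal := fun {x y} hxy =>
    ENNReal.toReal_mono (measure_ne_top P _)
      (measure_mono fun ω h => lt_of_le_of_lt h hxy)
  have hFmleF : ∀ x : ℝ, (P {ω | S ω < x}).toReal ≤ (P {ω | S ω ≤ x}).toReal := fun x =>
    ENNReal.toReal_mono (measure_ne_top P _) (measure_mono fun ω h => by
      simp only [mem_setOf_eq] at h ⊢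
      exact le_of_lt h)
  have hsplit : ∀ x : ℝ, P {ω | S ω ≤ x} = P {ω | S ω < x} + P (S ⁻¹' {x}) := by
    intro x
    have hd : Disjoint {ω | S ω < x} (S ⁻¹' {x}) := by
      rw [Set.disjoint_left]
      intro ω h1 h2
      simp only [mem_setOf_eq] at h1
      simp only [mem_preimage, mem_singleton_iff] at h2
      linarith [h2 ▸ h1]
    have hu : {ω | S ω ≤ x} = {ω | S ω < x} ∪ S ⁻¹' {x} := by
      ext ω
      simp only [mem_setOf_eq, mem_union, mem_preimage, mem_singleton_iff]
      exact le_iff_lt_or_eq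
    rw [hu, measure_union hd (hmSing x)]
  have hsplitR : ∀ x : ℝ, (P {ω | S ω ≤ x}).toReal
      = (P {ω | S ω < x}).toReal + (P (S ⁻¹' {x})).toReal := by
    intro x
    rw [hsplit x, ENNReal.toReal_add (measure_ne_top P _) (measure_ne_top P _)]
  have hF1 : ∀ x : ℝ, (P {ω | S ω ≤ x}).toReal ≤ 1 := fun x => by
    simpa using ENNReal.toReal_mono ENNReal.one_ne_top (prob_le_one (μ := P))
  have hFm0 : ∀ x : ℝ, 0 ≤ (P {ω | S ω < x}).toReal := fun x => ENNReal.toReal_nonneg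
  -- atoms
  set Dset : Set ℝ := {x | 0 < P (S ⁻¹' {x})} with hDset
  have hDc : Dset.Countable := by
    have := Measure.countable_meas_pos_of_disjoint_of_meas_iUnion_ne_top (μ := P)
      (As := fun x : ℝ => S ⁻¹' {x}) (fun x => hmSing x)
      (fun x y hxy => Set.disjoint_left.2 fun ω h1 h2 => hxy (by
        simp only [mem_preimage, mem_singleton_iff] at h1 h2
        rw [← h1, ← h2]))
      (measure_ne_top P _)
    exact this
  obtain ⟨f, hf⟩ := Set.Countable.exists_eq_range (hDc.insert 0) (insert_nonempty 0 Dset)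
  have hDsub : Dset ⊆ range f := by rw [← hf]; exact subset_insert _ _
  -- the auxiliary randomization W
  set Ψ : Ω × ℕ → ℝ := fun p =>
    if S p.1 = f p.2 then unifV P hP (S ⁻¹' {f p.2}) p.1 else 0 with hΨdef
  have hΨ : Measurable Ψ := by
    refine measurable_from_prod_countable_left fun n => ?_
    exact Measurable.ite (hS (measurableSet_singleton (f n)))
      (unifV_measurable hP (hmSing (f n))) measurable_const
  set idx : Ω → ℕ := fun ω => if h : ∃ n, S ω = f n then Nat.find h else 0 with hidxdef
  have hidx : Measurable idx := by
    refine measurable_to_countable' fun n => ?_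
    have hfib : idx ⁻¹' {n} =
        ({ω | S ω = f n} ∩ ⋂ k, ⋂ _ : k < n, {ω | ¬ S ω = f k}) ∪
        (if n = 0 then {ω | ∀ k, ¬ S ω = f k} else ∅) := by
      ext ω
      by_cases hex : ∃ k, S ω = f k
      · simp only [mem_preimage, mem_singleton_iff, hidxdef, dif_pos hex, mem_union,
          mem_inter_iff, mem_iInter, mem_setOf_eq]
        rw [Nat.find_eq_iff hex]
        constructor
        · rintro ⟨h1, h2⟩
          exact Or.inl ⟨h1, fun k hk => h2 k hk⟩
        · rintro (⟨h1, h2⟩ | hr)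
          · exact ⟨h1, fun m hm => h2 m hm⟩
          · by_cases hn : n = 0
            · rw [if_pos hn] at hr
              obtain ⟨k, hk⟩ := hex
              exact absurd hk (hr k)
            · rw [if_neg hn] at hr
              exact absurd hr (notMem_empty ω)
      · simp only [mem_preimage, mem_singleton_iff, hidxdef, dif_neg hex, mem_union,
          mem_inter_iff, mem_iInter, mem_setOf_eq]
        push_neg at hex
        by_cases hn : n = 0
        · subst hn
          simp [hex]
        · rw [if_neg hn]
          constructor
          · intro h; exact absurd h.symm hn
          · rintro (⟨h1, _⟩ | hr)
            · exact absurd h1 (hex n)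
            · exact absurd hr (notMem_empty ω)
    rw [hfib]
    refine MeasurableSet.union ?_ ?_
    · exact ((hS (measurableSet_singleton (f n))).inter
        (MeasurableSet.iInter fun k => MeasurableSet.iInter fun _ =>
          (hS (measurableSet_singleton (f k))).compl))
    · split_ifs
      · have heq : {ω | ∀ k, ¬ S ω = f k} = ⋂ k, (S ⁻¹' {f k})ᶜ := by
          ext ω
          simp
        rw [heq]
        exact MeasurableSet.iInter fun k => (hS (measurableSet_singleton (f k))).compl
      · exact MeasurableSet.empty
  set W : Ω → ℝ := fun ω => Ψ (ω, idx ω) with hWdef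
  have hW : Measurable W := hΨ.comp (measurable_id.prodMk hidx)
  have hWV : ∀ ω, S ω ∈ range f → W ω = unifV P hP (S ⁻¹' {S ω}) ω := by
    intro ω hω
    obtain ⟨n0, hn0⟩ := hω
    have hex : ∃ n, S ω = f n := ⟨n0, hn0.symm⟩
    have hfind : S ω = f (Nat.find hex) := Nat.find_spec hex
    simp only [hWdef, hΨdef, hidxdef, dif_pos hex, ← hfind, if_pos rfl]
    simp
  have hW0 : ∀ ω, 0 ≤ W ω := by
    intro ω
    simp only [hWdef, hΨdef]
    split_ifs
    · exact unifV_nonneg hP _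
    · exact le_rfl
  have hW1 : ∀ ω, W ω ≤ 1 := by
    intro ω
    simp only [hWdef, hΨdef]
    split_ifs
    · exact unifV_le_one hP _
    · exact zero_le_one
  -- the uniform variable U
  set U : Ω → ℝ := fun ω => (P {ω' | S ω' < S ω}).toReal +
    W ω * ((P {ω' | S ω' ≤ S ω}).toReal - (P {ω' | S ω' < S ω}).toReal) with hUdef
  have hU : Measurable U := by
    have hFmono' : Monotone fun x : ℝ => (P {ω | S ω ≤ x}).toReal := fun x y h => hFmono h
    have hFmmono' : Monotone fun x : ℝ => (P {ω | S ω < x}).toReal := fun x y h => hFmmono h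
    exact ((hFmmono'.measurable.comp hS).add
      (hW.mul ((hFmono'.measurable.comp hS).sub (hFmmono'.measurable.comp hS))))
  have hjump : ∀ ω, (P (S ⁻¹' {S ω})).toReal
      = (P {ω' | S ω' ≤ S ω}).toReal - (P {ω' | S ω' < S ω}).toReal := by
    intro ω
    rw [hsplitR (S ω)]
    ring
  have hUgeFm : ∀ ω, (P {ω' | S ω' < S ω}).toReal ≤ U ω := by
    intro ω
    have h1 : 0 ≤ (P {ω' | S ω' ≤ S ω}).toReal - (P {ω' | S ω' < S ω}).toReal := by
      have := hFmleF (S ω); linarith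
    rw [hUdef]
    simp only
    nlinarith [hW0 ω]
  have hUleF : ∀ ω, U ω ≤ (P {ω' | S ω' ≤ S ω}).toReal := by
    intro ω
    have h1 : 0 ≤ (P {ω' | S ω' ≤ S ω}).toReal - (P {ω' | S ω' < S ω}).toReal := by
      have := hFmleF (S ω); linarith
    rw [hUdef]
    simp only
    nlinarith [hW1 ω, hW0 ω]
  -- the null set
  set N : Set Ω := (⋃ q : ℚ, {ω | (q:ℝ) < S ω ∧ P {ω' | S ω' ≤ S ω} ≤ P {ω' | S ω' ≤ (q:ℝ)}}) ∪
    (⋃ x ∈ Dset, (S ⁻¹' {x} ∩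
      {ω | unifV P hP (S ⁻¹' {x}) ω = 0 ∨ unifV P hP (S ⁻¹' {x}) ω = 1})) with hNdef
  have hN : P N = 0 := by
    refine measure_union_null (measure_iUnion_null fun q => null_flat P hS (q:ℝ)) ?_
    rw [measure_biUnion_null_iff hDc]
    intro x hx
    have hsplit2 : S ⁻¹' {x} ∩
        {ω | unifV P hP (S ⁻¹' {x}) ω = 0 ∨ unifV P hP (S ⁻¹' {x}) ω = 1} ⊆
        (S ⁻¹' {x} ∩ {ω | unifV P hP (S ⁻¹' {x}) ω ≤ 0}) ∪
        (S ⁻¹' {x} ∩ {ω | unifV P hP (S ⁻¹' {x}) ω = 1}) := by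
      rintro ω ⟨h1, h2⟩
      rcases h2 with h2 | h2
      · exact Or.inl ⟨h1, le_of_eq h2⟩
      · exact Or.inr ⟨h1, h2⟩
    refine measure_mono_null hsplit2 (le_antisymm ?_ zero_le)
    calc P _ ≤ P (S ⁻¹' {x} ∩ {ω | unifV P hP (S ⁻¹' {x}) ω ≤ 0})
        + P (S ⁻¹' {x} ∩ {ω | unifV P hP (S ⁻¹' {x}) ω = 1}) := measure_union_le _ _
    _ = 0 := by
        rw [unifV_Iic_measure hP (hmSing x) le_rfl zero_le_one, unifV_eq_one_null hP (hmSing x)]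
        simp
  -- key pointwise facts off N
  have hflat : ∀ ω, ω ∉ N → ∀ x, x < S ω → ¬ (P {ω' | S ω' ≤ S ω} ≤ P {ω' | S ω' ≤ x}) := by
    intro ω hω x hx hle
    obtain ⟨r, hr1, hr2⟩ := exists_rat_btwn hx
    refine hω (Or.inl (mem_iUnion.2 ⟨r, hr2, ?_⟩))
    exact hle.trans (measure_mono fun ω' h => le_trans h hr1.le)
  have hVstrict : ∀ ω, ω ∉ N → S ω ∈ Dset →
      0 < unifV P hP (S ⁻¹' {S ω}) ω ∧ unifV P hP (S ⁻¹' {S ω}) ω < 1 := by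
    intro ω hω hD
    have hnot : ¬ (unifV P hP (S ⁻¹' {S ω}) ω = 0 ∨ unifV P hP (S ⁻¹' {S ω}) ω = 1) := by
      intro hcon
      exact hω (Or.inr (mem_biUnion hD ⟨rfl, hcon⟩))
    push_neg at hnot
    exact ⟨lt_of_le_of_ne (unifV_nonneg hP ω) (Ne.symm hnot.1),
      lt_of_le_of_ne (unifV_le_one hP ω) hnot.2⟩
  refine ⟨U, hU, ?_, ?_⟩
  · -- uniformity
    haveI := Measure.isProbabilityMeasure_map (μ := P) hU.aemeasurable
    refine Measure.ext_of_Iic (P.map U) _ fun t => ?_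
    rw [Measure.map_apply hU measurableSet_Iic, Measure.restrict_apply measurableSet_Iic]
    rcases le_or_gt t 0 with ht0 | ht0
    · -- t ≤ 0
      have hRHS : Iic t ∩ Ioo (0:ℝ) 1 = ∅ := by
        ext x
        simp only [mem_inter_iff, mem_Iic, mem_Ioo, mem_empty_iff_false, iff_false, not_and]
        intro h1 h2
        intro h3
        linarith
      rw [hRHS, measure_empty]
      refine measure_mono_null (fun ω (hω : U ω ≤ t) => ?_) hN
      by_contra hωN
      rcases Classical.em (S ω ∈ Dset) with hD | hD
      · -- atom: U > 0
        have hj : 0 < (P {ω' | S ω' ≤ S ω}).toReal - (P {ω' | S ω' < S ω}).toReal := by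
          have := hjump ω
          have hpos : 0 < (P (S ⁻¹' {S ω})).toReal :=
            ENNReal.toReal_pos (ne_of_gt hD) (measure_ne_top P _)
          linarith
        have hV := hVstrict ω hωN hD
        have hWeq := hWV ω (hDsub hD)
        have : 0 < U ω := by
          rw [hUdef]
          simp only
          rw [hWeq]
          nlinarith [hFm0 (S ω), hV.1]
        linarith
      · -- non-atom: U = F(S ω) > 0
        have hj : (P (S ⁻¹' {S ω})).toReal = 0 := by
          simp only [hDset, mem_setOf_eq, not_lt, le_zero_iff] at hD
          rw [hD]; simp
        have hUF : U ω = (P {ω' | S ω' ≤ S ω}).toReal := by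
          have h2 := hjump ω
          have h3 : (P {ω' | S ω' ≤ S ω}).toReal = (P {ω' | S ω' < S ω}).toReal := by
            linarith
          rw [hUdef]
          simp only
          rw [h3]
          ring
        have hG0 : P {ω' | S ω' ≤ S ω} = 0 := by
          have h1 : (P {ω' | S ω' ≤ S ω}).toReal ≤ 0 := by rw [← hUF]; linarith
          have h2 := ENNReal.toReal_nonneg (a := P {ω' | S ω' ≤ S ω})
          exact (ENNReal.toReal_eq_zero_iff _).1 (le_antisymm h1 h2) |>.resolve_right
            (measure_ne_top P _)
        obtain ⟨r, hr⟩ := exists_rat_lt (S ω)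
        exact (hflat ω hωN r hr) (by rw [hG0]; exact zero_le)
    rcases le_or_gt 1 t with ht1 | ht1
    · -- t ≥ 1
      have hRHS : Iic t ∩ Ioo (0:ℝ) 1 = Ioo (0:ℝ) 1 := by
        refine inter_eq_right.2 fun x hx => ?_
        exact le_trans hx.2.le ht1
      rw [hRHS]
      have hLHS : U ⁻¹' (Iic t) = univ := by
        refine eq_univ_of_forall fun ω => ?_
        simp only [mem_preimage, mem_Iic]
        calc U ω ≤ (P {ω' | S ω' ≤ S ω}).toReal := hUleF ω
        _ ≤ 1 := hF1 _
        _ ≤ t := ht1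
      rw [hLHS, measure_univ, Real.volume_Ioo]
      simp
    · -- 0 < t < 1
      have hRHS : Iic t ∩ Ioo (0:ℝ) 1 = Ioc 0 t := by
        ext x
        simp only [mem_inter_iff, mem_Iic, mem_Ioo, mem_Ioc]
        constructor
        · rintro ⟨h1, h2, h3⟩; exact ⟨h2, h1⟩
        · rintro ⟨h1, h2⟩; exact ⟨h2, h1, lt_of_le_of_lt h2 ht1⟩
      rw [hRHS, Real.volume_Ioc, sub_zero]
      set q : ℝ := VaR P S t with hq
      have hFq : t ≤ (P {ω | S ω ≤ q}).toReal := le_cdf_VaR P hS ht0 ht1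
      have hFmq : (P {ω | S ω < q}).toReal ≤ t := cdfm_VaR_le P hS ht0 ht1
      set T : Set Ω := {ω | S ω < q} ∪ (S ⁻¹' {q} ∩ U ⁻¹' (Iic t)) with hTdef
      have hTsub : T ⊆ U ⁻¹' (Iic t) := by
        rintro ω (hω | hω)
        · simp only [mem_preimage, mem_Iic]
          calc U ω ≤ (P {ω' | S ω' ≤ S ω}).toReal := hUleF ω
          _ ≤ (P {ω' | S ω' < q}).toReal := hFmF hω
          _ ≤ t := hFmq
        · exact hω.2
      have hsub2 : U ⁻¹' (Iic t) ⊆ T ∪ N := by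
        intro ω hω
        simp only [mem_preimage, mem_Iic] at hω
        rcases lt_trichotomy (S ω) q with hlt | heq | hgt
        · exact Or.inl (Or.inl hlt)
        · exact Or.inl (Or.inr ⟨heq, by simpa [mem_preimage, mem_Iic] using hω⟩)
        · -- S ω > q : show ω ∈ N
          right
          by_contra hωN
          have h1 : t ≤ (P {ω' | S ω' < S ω}).toReal :=
            le_trans hFq (hFmF hgt)
          have h2 : U ω ≤ t := hω
          have h3 := hUgeFm ω
          -- so W ω * jump = 0 and everything is equal to t
          rcases Classical.em (S ω ∈ Dset) with hD | hD
          · have hjpos : 0 < (P {ω' | S ω' ≤ S ω}).toReal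
                - (P {ω' | S ω' < S ω}).toReal := by
              have := hjump ω
              have hpos : 0 < (P (S ⁻¹' {S ω})).toReal :=
                ENNReal.toReal_pos (ne_of_gt hD) (measure_ne_top P _)
              linarith
            have hV := hVstrict ω hωN hD
            have hWeq := hWV ω (hDsub hD)
            have : t < U ω := by
              rw [hUdef]
              simp only
              rw [hWeq]
              nlinarith [hV.1]
            linarith
          · have hj : (P (S ⁻¹' {S ω})).toReal = 0 := by
              simp only [hDset, mem_setOf_eq, not_lt, le_zero_iff] at hD
              rw [hD]; simp
            have hUF : U ω = (P {ω' | S ω' ≤ S ω}).toReal := by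
              have h2 := hjump ω
              have h3 : (P {ω' | S ω' ≤ S ω}).toReal = (P {ω' | S ω' < S ω}).toReal := by
                linarith
              rw [hUdef]
              simp only
              rw [h3]
              ring
            -- F (S ω) ≤ t ≤ F q, S ω > q : flat
            have hle : (P {ω' | S ω' ≤ S ω}).toReal ≤ (P {ω' | S ω' ≤ q}).toReal := by
              rw [← hUF]
              linarith
            have hle' : P {ω' | S ω' ≤ S ω} ≤ P {ω' | S ω' ≤ q} :=
              (ENNReal.toReal_le_toReal (measure_ne_top P _) (measure_ne_top P _)).1 hle
            exact (hflat ω hωN q hgt) hle'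
      have hPT : P (U ⁻¹' (Iic t)) = P T := by
        refine le_antisymm ?_ (measure_mono hTsub)
        calc P (U ⁻¹' (Iic t)) ≤ P (T ∪ N) := measure_mono hsub2
        _ ≤ P T + P N := measure_union_le _ _
        _ = P T := by rw [hN, add_zero]
      have hTm : P T = P {ω | S ω < q} + P (S ⁻¹' {q} ∩ U ⁻¹' (Iic t)) := by
        refine measure_union ?_ ((hmSing q).inter (hU measurableSet_Iic))
        rw [Set.disjoint_left]
        rintro ω h1 ⟨h2, _⟩
        simp only [mem_setOf_eq] at h1
        simp only [mem_preimage, mem_singleton_iff] at h2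
        linarith [h2 ▸ h1]
      rcases Classical.em (q ∈ Dset) with hD | hD
      · -- atom at q
        have hjpos : 0 < (P (S ⁻¹' {q})).toReal :=
          ENNReal.toReal_pos (ne_of_gt hD) (measure_ne_top P _)
        set j : ℝ := (P (S ⁻¹' {q})).toReal with hj
        set r : ℝ := (t - (P {ω | S ω < q}).toReal) / j with hr
        have hr0 : 0 ≤ r := div_nonneg (by linarith) hjpos.le
        have hr1 : r ≤ 1 := by
          rw [hr, div_le_one hjpos]
          have := hsplitR q
          linarith
        have hje : (P {ω' | S ω' ≤ q}).toReal - (P {ω' | S ω' < q}).toReal = j := by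
          have := hsplitR q
          rw [hj]
          linarith
        have hUiff : ∀ ω, S ω = q → (U ω ≤ t ↔ unifV P hP (S ⁻¹' {q}) ω ≤ r) := by
          intro ω h1
          have hWeq : W ω = unifV P hP (S ⁻¹' {q}) ω := by
            have h' := hWV ω (by rw [h1]; exact hDsub hD)
            rw [h1] at h'
            exact h'
          have hUeq : U ω = (P {ω' | S ω' < q}).toReal + unifV P hP (S ⁻¹' {q}) ω * j := by
            rw [hUdef]
            simp only
            rw [h1, hWeq, hje]
          rw [hUeq, hr]
          constructor
          · intro h
            rw [le_div_iff₀ hjpos]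
            linarith
          · intro h
            rw [le_div_iff₀ hjpos] at h
            linarith
        have hseteq : S ⁻¹' {q} ∩ U ⁻¹' (Iic t)
            = S ⁻¹' {q} ∩ {ω | unifV P hP (S ⁻¹' {q}) ω ≤ r} := by
          ext ω
          simp only [mem_inter_iff, mem_preimage, mem_singleton_iff, mem_Iic, mem_setOf_eq]
          constructor
          · rintro ⟨h1, h2⟩
            exact ⟨h1, (hUiff ω h1).1 h2⟩
          · rintro ⟨h1, h2⟩
            exact ⟨h1, (hUiff ω h1).2 h2⟩
        have hunif := unifV_Iic_measure hP (hmSing q) hr0 hr1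
        have hPA : P (S ⁻¹' {q}) = ENNReal.ofReal j := by
          rw [hj, ENNReal.ofReal_toReal (measure_ne_top P _)]
        have hGmq : P {ω | S ω < q} = ENNReal.ofReal ((P {ω | S ω < q}).toReal) :=
          (ENNReal.ofReal_toReal (measure_ne_top P _)).symm
        rw [hPT, hTm, hseteq, hunif, hPA, ← ENNReal.ofReal_mul hr0, hGmq,
          ← ENNReal.ofReal_add ENNReal.toReal_nonneg (by positivity)]
        congr 1
        rw [hr, div_mul_cancel₀ _ hjpos.ne']
        ring
      · -- no atom at q
        have hPq : P (S ⁻¹' {q}) = 0 := by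
          simp only [hDset, mem_setOf_eq, not_lt, le_zero_iff] at hD
          exact hD
        have hinner : P (S ⁻¹' {q} ∩ U ⁻¹' (Iic t)) = 0 :=
          measure_mono_null inter_subset_left hPq
        have hteq : (P {ω | S ω < q}).toReal = t := by
          have h1 := hsplitR q
          have hj0 : (P (S ⁻¹' {q})).toReal = 0 := by rw [hPq]; simp
          linarith
        rw [hPT, hTm, hinner, add_zero, ← hteq, ENNReal.ofReal_toReal (measure_ne_top P _)]
  · -- the a.s. representation
    rw [ae_iff]
    refine measure_mono_null (fun ω hω => ?_) hN
    simp only [mem_setOf_eq] at hω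
    by_contra hωN
    apply hω
    rcases Classical.em (S ω ∈ Dset) with hD | hD
    · have hjpos : 0 < (P {ω' | S ω' ≤ S ω}).toReal - (P {ω' | S ω' < S ω}).toReal := by
        have := hjump ω
        have hpos : 0 < (P (S ⁻¹' {S ω})).toReal :=
          ENNReal.toReal_pos (ne_of_gt hD) (measure_ne_top P _)
        linarith
      have hV := hVstrict ω hωN hD
      have hWeq := hWV ω (hDsub hD)
      have hUlt : (P {ω' | S ω' < S ω}).toReal < U ω := by
        rw [hUdef]
        simp only
        rw [hWeq]
        nlinarith [hV.1]
      refine (VaR_eq_of P (hUleF ω) ?_).symm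
      intro x hx
      calc (P {ω' | S ω' ≤ x}).toReal ≤ (P {ω' | S ω' < S ω}).toReal := hFmF hx
      _ < U ω := hUlt
    · have hj : (P (S ⁻¹' {S ω})).toReal = 0 := by
        simp only [hDset, mem_setOf_eq, not_lt, le_zero_iff] at hD
        rw [hD]; simp
      have hUF : U ω = (P {ω' | S ω' ≤ S ω}).toReal := by
        have h2 := hjump ω
        have h3 : (P {ω' | S ω' ≤ S ω}).toReal = (P {ω' | S ω' < S ω}).toReal := by
          linarith
        rw [hUdef]
        simp only
        rw [h3]
        ring
      refine (VaR_eq_of P (hUleF ω) ?_).symm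
      intro x hx
      have hnle := hflat ω hωN x hx
      have hlt' : P {ω' | S ω' ≤ x} < P {ω' | S ω' ≤ S ω} := not_le.1 hnle
      rw [hUF]
      exact (ENNReal.toReal_lt_toReal (measure_ne_top P _) (measure_ne_top P _)).2 hlt'
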